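/- arXiv:2202.00491 — 3 statements merged into one kernel-verified Lean document; each statement's English description precedes it below -/
import Mathlib

section
/- Let m₁, m₂ ≥ 1. A permutation σ ∈ Σ_{m₁+m₂} is an (m₁,m₂)-shuffle if σ⁻¹(1) < σ⁻¹(2) < ⋯ < σ⁻¹(m₁) and σ⁻¹(m₁+1) < ⋯ < σ⁻¹(m₁+m₂); Sh(m₁,m₂) denotes the set of (m₁,m₂)-shuffles. Let (P¹,π¹) ∈ O_{d,n}^{m₁} × Σ_{m₁}^d be a level-m₁ index and (P²,π²) ∈ O_{d,n}^{m₂} × Σ_{m₂}^d a level-m₂ index. Define P := (P¹_1,…,P¹_{m₁}, P²_1,…,P²_{m₂}) ∈ O_{d,n}^{m₁+m₂} and π = (π_1,…,π_d) ∈ Σ_{m₁+m₂}^d by π_j(i) := π¹_j(i) for 1 ≤ i ≤ m₁ and π_j(i) := m₁ + π²_j(i − m₁) for m₁ < i ≤ m₁+m₂. Then for every x ∈ Lip(□^d, ℝ^n): Φ_{m₁}^{P¹,π¹}(x) · Φ_{m₂}^{P²,π²}(x) = Σ over σ = (σ_1,…,σ_d) ∈ Sh(m₁,m₂)^d of Φ_{m₁+m₂}^{P,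 (π_1∘σ_1,…,π_d∘σ_d)}(x), where π_j∘σ_j denotes the permutation i ↦ π_j(σ_j(i)). -/
open MeasureTheory

open scoped Classical

noncomputable section

/-- The unit cube `[0,1]^d` as a subset of `Fin d → ℝ`. -/
def unitCube (d : ℕ) : Set (Fin d → ℝ) := Set.Icc 0 1

/-- Lipschitz condition with constant `L`, with respect to Euclidean norms. -/
def EuclidLip {d n : ℕ} (L : ℝ) (x : (Fin d → ℝ) → Fin n → ℝ) : Prop :=
  ∀ s t : Fin d → ℝ,
    Real.sqrt (∑ k, (x s k - x t k) ^ 2) ≤ L * Real.sqrt (∑ j, (s j - t j) ^ 2)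

/-- Lipschitz map. -/
def IsLipMap {d n : ℕ} (x : (Fin d → ℝ) → Fin n → ℝ) : Prop :=
  ∃ L : ℝ, EuclidLip L x

/-- The Jacobian minor `J[x_P](s)`: the determinant of the `d × d` matrix
with `(i,j)` entry `∂ x_{P i} / ∂ s_j (s)`. -/
def jacobianMinor {d n : ℕ} (x : (Fin d → ℝ) → Fin n → ℝ) (P : Fin d → Fin n)
    (s : Fin d → ℝ) : ℝ :=
  (Matrix.of fun i j : Fin d => fderiv ℝ (fun t => x t (P i)) s (Pi.single j 1)).det

/-- The permuted `m`-simplex `Δ^m_π(a,b)`. -/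
def permSimplex {m : ℕ} (π : Equiv.Perm (Fin m)) (a b : ℝ) : Set (Fin m → ℝ) :=
  {u | (∀ i, u i ∈ Set.Icc a b) ∧ StrictMono fun i => u (π i)}

/-- The integration domain `D^{m,d}_π(a,b) = Δ^m_{π 1}(a₁,b₁) × ⋯ × Δ^m_{π d}(a_d,b_d)`. -/
def intDomain {m d : ℕ} (π : Fin d → Equiv.Perm (Fin m)) (a b : Fin d → ℝ) :
    Set (Fin m → Fin d → ℝ) :=
  {t | ∀ j, (fun i => t i j) ∈ permSimplex (π j) (a j) (b j)}

/-- The restricted mapping space monomial `Φ_m^{P,π}(x)_{a,b}`. -/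
def msMonomialOn {d n m : ℕ} (x : (Fin d → ℝ) → Fin n → ℝ)
    (P : Fin m → Fin d → Fin n) (π : Fin d → Equiv.Perm (Fin m))
    (a b : Fin d → ℝ) : ℝ :=
  ∫ t in intDomain π a b, ∏ i, jacobianMinor x (P i) (t i)

/-- The mapping space monomial `Φ_m^{P,π}(x)`. -/
def msMonomial {d n m : ℕ} (x : (Fin d → ℝ) → Fin n → ℝ)
    (P : Fin m → Fin d → Fin n) (π : Fin d → Equiv.Perm (Fin m)) : ℝ :=
  msMonomialOn x P π (fun _ => 0) (fun _ => 1)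

/-- `σ` is an `(m₁,m₂)`-shuffle: `σ⁻¹` is increasing on the first `m₁` and on
the last `m₂` elements. -/
def IsShuffle (m₁ m₂ : ℕ) (σ : Equiv.Perm (Fin (m₁ + m₂))) : Prop :=
  (∀ i j : Fin (m₁ + m₂), i < j → (j : ℕ) < m₁ → σ.symm i < σ.symm j) ∧
  (∀ i j : Fin (m₁ + m₂), i < j → m₁ ≤ (i : ℕ) → σ.symm i < σ.symm j)

/-- The concatenation of two permutations:
`(permSum π₁ π₂) i = π₁ i` for `i < m₁` and `= m₁ + π₂ (i - m₁)` otherwise. -/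
def permSum {m₁ m₂ : ℕ} (π₁ : Equiv.Perm (Fin m₁)) (π₂ : Equiv.Perm (Fin m₂)) :
    Equiv.Perm (Fin (m₁ + m₂)) :=
  (finSumFinEquiv.symm.trans (Equiv.sumCongr π₁ π₂)).trans finSumFinEquiv

/-! ### Auxiliary lemmas -/

lemma measurable_jacobianMinor {d n : ℕ} (x : (Fin d → ℝ) → Fin n → ℝ) (P : Fin d → Fin n) :
    Measurable (jacobianMinor x P) := by
  unfold jacobianMinor
  simp only [Matrix.det_apply', Matrix.of_apply]
  refine Finset.measurable_sum _ fun σ _ => Measurable.const_mul ?_ _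
  exact Finset.measurable_prod _ fun i _ => measurable_fderiv_apply_const ℝ _ _

lemma abs_jacobianMinor_le {d n : ℕ} {L : ℝ} (hL0 : 0 ≤ L) {x : (Fin d → ℝ) → Fin n → ℝ}
    (hx : EuclidLip L x) (P : Fin d → Fin n) (s : Fin d → ℝ) :
    |jacobianMinor x P s| ≤ (d.factorial : ℝ) * (L * Real.sqrt d) ^ d := by
  have hC0 : 0 ≤ L * Real.sqrt d := mul_nonneg hL0 (Real.sqrt_nonneg _)
  have key : ∀ (k : Fin n) (j : Fin d),
      |fderiv ℝ (fun t => x t k) s (Pi.single j 1)| ≤ L * Real.sqrt d := by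
    intro k j
    have hlip : ∀ u : Fin d → ℝ, ‖x u k - x s k‖ ≤ (L * Real.sqrt d) * ‖u - s‖ := by
      intro u
      have h1 : |x u k - x s k| ≤ Real.sqrt (∑ k', (x u k' - x s k') ^ 2) := by
        rw [← Real.sqrt_sq_eq_abs]
        exact Real.sqrt_le_sqrt
          (Finset.single_le_sum (f := fun k' => (x u k' - x s k') ^ 2)
            (fun i _ => sq_nonneg _) (Finset.mem_univ k))
      have h2 : Real.sqrt (∑ j', (u j' - s j') ^ 2) ≤ Real.sqrt d * ‖u - s‖ := by
        have hsum : ∑ j', (u j' - s j') ^ 2 ≤ ∑ _j' : Fin d, ‖u - s‖ ^ 2 := by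
          refine Finset.sum_le_sum fun i _ => ?_
          have h := norm_le_pi_norm (u - s) i
          have h0 : (u i - s i) ^ 2 = ‖(u - s) i‖ ^ 2 := by
            rw [Real.norm_eq_abs, sq_abs]; simp [Pi.sub_apply]
          rw [h0]
          exact pow_le_pow_left₀ (norm_nonneg _) h 2
        calc Real.sqrt (∑ j', (u j' - s j') ^ 2)
            ≤ Real.sqrt (∑ _j' : Fin d, ‖u - s‖ ^ 2) := Real.sqrt_le_sqrt hsum
          _ = Real.sqrt ((d : ℝ) * ‖u - s‖ ^ 2) := by
              rw [Finset.sum_const, Finset.card_univ, Fintype.card_fin, nsmul_eq_mul]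
          _ = Real.sqrt d * ‖u - s‖ := by
              rw [Real.sqrt_mul (Nat.cast_nonneg d), Real.sqrt_sq (norm_nonneg _)]
      calc ‖x u k - x s k‖ = |x u k - x s k| := rfl
        _ ≤ Real.sqrt (∑ k', (x u k' - x s k') ^ 2) := h1
        _ ≤ L * Real.sqrt (∑ j', (u j' - s j') ^ 2) := hx u s
        _ ≤ L * (Real.sqrt d * ‖u - s‖) := mul_le_mul_of_nonneg_left h2 hL0
        _ = (L * Real.sqrt d) * ‖u - s‖ := by ring
    have hop : ‖fderiv ℝ (fun t => x t k) s‖ ≤ L * Real.sqrt d :=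
      norm_fderiv_le_of_lip' ℝ hC0 (Filter.Eventually.of_forall hlip)
    calc |fderiv ℝ (fun t => x t k) s (Pi.single j 1)|
        = ‖fderiv ℝ (fun t => x t k) s (Pi.single j 1)‖ := rfl
      _ ≤ ‖fderiv ℝ (fun t => x t k) s‖ * ‖(Pi.single j 1 : Fin d → ℝ)‖ :=
          ContinuousLinearMap.le_opNorm _ _
      _ = ‖fderiv ℝ (fun t => x t k) s‖ := by rw [Pi.norm_single]; simp
      _ ≤ L * Real.sqrt d := hop
  have := Matrix.det_le
    (A := Matrix.of fun i j : Fin d => fderiv ℝ (fun t => x t (P i)) s (Pi.single j 1))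
    (abv := AbsoluteValue.abs) (x := L * Real.sqrt d) (fun i j => key (P i) j)
  simpa [jacobianMinor, Fintype.card_fin, nsmul_eq_mul] using this

lemma measurableSet_permSimplex {m : ℕ} (π : Equiv.Perm (Fin m)) (a b : ℝ) :
    MeasurableSet (permSimplex π a b) := by
  have h : permSimplex π a b =
      (⋂ i, (fun u : Fin m → ℝ => u i) ⁻¹' Set.Icc a b) ∩
      ⋂ (p : Fin m × Fin m) (_ : p.1 < p.2), {u : Fin m → ℝ | u (π p.1) < u (π p.2)} := by
    ext u
    simp only [permSimplex, Set.mem_setOf_eq, Set.mem_inter_iff, Set.mem_iInter,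
      Set.mem_preimage]
    constructor
    · rintro ⟨h1, h2⟩; exact ⟨h1, fun p hp => h2 hp⟩
    · rintro ⟨h1, h2⟩; exact ⟨h1, fun i j hij => h2 (i, j) hij⟩
  rw [h]
  refine MeasurableSet.inter (MeasurableSet.iInter fun i => ?_)
    (MeasurableSet.iInter fun p => MeasurableSet.iInter fun _ => ?_)
  · exact (measurable_pi_apply i) measurableSet_Icc
  · exact measurableSet_lt (measurable_pi_apply _) (measurable_pi_apply _)

lemma measurable_col {m d : ℕ} (j : Fin d) :
    Measurable (fun (t : Fin m → Fin d → ℝ) (i : Fin m) => t i j) :=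
  measurable_pi_lambda _ fun i => (measurable_pi_apply j).comp (measurable_pi_apply i)

lemma measurableSet_intDomain {m d : ℕ} (π : Fin d → Equiv.Perm (Fin m)) (a b : Fin d → ℝ) :
    MeasurableSet (intDomain π a b) := by
  have h : intDomain π a b =
      ⋂ j, (fun (t : Fin m → Fin d → ℝ) (i : Fin m) => t i j) ⁻¹'
        permSimplex (π j) (a j) (b j) := by
    ext t
    simp only [intDomain, Set.mem_setOf_eq, Set.mem_iInter, Set.mem_preimage]
  rw [h]
  exact MeasurableSet.iInter fun j => (measurable_col j) (measurableSet_permSimplex _ _ _)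

lemma perm_eq_of_strictMono_comp {N : ℕ} {v : Fin N → ℝ} {σ σ' : Equiv.Perm (Fin N)}
    (h : StrictMono (v ∘ σ)) (h' : StrictMono (v ∘ σ')) : σ = σ' := by
  haveI : WellFoundedLT (Fin N) := inferInstance
  have key : ∀ (τ τ' : Equiv.Perm (Fin N)), StrictMono (v ∘ τ) → StrictMono (v ∘ τ') →
      StrictMono fun i => τ'.symm (τ i) := by
    intro τ τ' hτ hτ' i j hij
    have h1 : v (τ i) < v (τ j) := hτ hij
    have h2 : (v ∘ τ') (τ'.symm (τ i)) < (v ∘ τ') (τ'.symm (τ j)) := by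
      simpa [Function.comp] using h1
    exact hτ'.lt_iff_lt.mp h2
  have h1 := key σ σ' h h'
  have h2 := key σ' σ h' h
  have heq : ∀ i, σ'.symm (σ i) = i := by
    intro i
    have l1 : i ≤ σ'.symm (σ i) := h1.le_apply
    have l2 : σ'.symm (σ i) ≤ σ.symm (σ' (σ'.symm (σ i))) := h2.le_apply
    rw [Equiv.apply_symm_apply, Equiv.symm_apply_apply] at l2
    exact le_antisymm l2 l1
  refine Equiv.ext fun i => ?_
  have := congrArg σ' (heq i)
  simpa using this

lemma strictMono_comp_iff {N : ℕ} {v : Fin N → ℝ} {σ : Equiv.Perm (Fin N)}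
    (h : StrictMono (v ∘ σ)) (a b : Fin N) : v a < v b ↔ σ.symm a < σ.symm b := by
  constructor
  · intro hv
    apply h.lt_iff_lt.mp
    simpa [Function.comp] using hv
  · intro hs
    simpa [Function.comp] using h hs

lemma permSum_castAdd {m₁ m₂ : ℕ} (π₁ : Equiv.Perm (Fin m₁)) (π₂ : Equiv.Perm (Fin m₂))
    (i : Fin m₁) : permSum π₁ π₂ (Fin.castAdd m₂ i) = Fin.castAdd m₂ (π₁ i) := by
  simp [permSum]

lemma permSum_natAdd {m₁ m₂ : ℕ} (π₁ : Equiv.Perm (Fin m₁)) (π₂ : Equiv.Perm (Fin m₂))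
    (i : Fin m₂) : permSum π₁ π₂ (Fin.natAdd m₁ i) = Fin.natAdd m₁ (π₂ i) := by
  simp [permSum]

lemma hyperplane_null {N d : ℕ} (j : Fin d) (i i' : Fin N) (hne : i ≠ i') :
    volume {t : Fin N → Fin d → ℝ | t i j = t i' j} = 0 := by
  classical
  set ℓ : (Fin N → Fin d → ℝ) →ₗ[ℝ] ℝ :=
    ((LinearMap.proj j : (Fin d → ℝ) →ₗ[ℝ] ℝ).comp
      (LinearMap.proj i : (Fin N → Fin d → ℝ) →ₗ[ℝ] (Fin d → ℝ))) -
    ((LinearMap.proj j : (Fin d → ℝ) →ₗ[ℝ] ℝ).comp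
      (LinearMap.proj i' : (Fin N → Fin d → ℝ) →ₗ[ℝ] (Fin d → ℝ))) with hℓ
  have h : {t : Fin N → Fin d → ℝ | t i j = t i' j} = ↑(LinearMap.ker ℓ) := by
    ext t
    simp [hℓ, LinearMap.mem_ker, sub_eq_zero, LinearMap.sub_apply]
  rw [h]
  refine Measure.addHaar_submodule _ _ (fun htop => ?_)
  have hmem : (Pi.single i (fun _ => (1:ℝ)) : Fin N → Fin d → ℝ) ∈ LinearMap.ker ℓ := by
    rw [htop]; trivial
  rw [LinearMap.mem_ker] at hmem
  simp [hℓ, LinearMap.sub_apply, Pi.single_eq_same, Pi.single_eq_of_ne (Ne.symm hne)] at hmem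

/-- The measurable equivalence splitting `Fin (m₁+m₂) → X` into a product. -/
def psiEquiv (m₁ m₂ : ℕ) (X : Type*) [MeasurableSpace X] :
    ((Fin m₁ → X) × (Fin m₂ → X)) ≃ᵐ (Fin (m₁ + m₂) → X) :=
  (MeasurableEquiv.sumPiEquivProdPi (fun _ : Fin m₁ ⊕ Fin m₂ => X)).symm.trans
    (MeasurableEquiv.piCongrLeft (fun _ => X) finSumFinEquiv)

lemma psiEquiv_apply {m₁ m₂ : ℕ} {X : Type*} [MeasurableSpace X]
    (p : (Fin m₁ → X) × (Fin m₂ → X)) :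
    psiEquiv m₁ m₂ X p = Fin.append p.1 p.2 := by
  funext i
  refine Fin.addCases (fun i0 => ?_) (fun i0 => ?_) i
  · rw [Fin.append_left]
    show (MeasurableEquiv.piCongrLeft (fun _ : Fin (m₁+m₂) => X) finSumFinEquiv) _
      (Fin.castAdd m₂ i0) = _
    rw [← finSumFinEquiv_apply_left i0, MeasurableEquiv.piCongrLeft_apply_apply]
    rfl
  · rw [Fin.append_right]
    show (MeasurableEquiv.piCongrLeft (fun _ : Fin (m₁+m₂) => X) finSumFinEquiv) _
      (Fin.natAdd m₁ i0) = _
    rw [← finSumFinEquiv_apply_right i0, MeasurableEquiv.piCongrLeft_apply_apply]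
    rfl

lemma psiEquiv_measurePreserving (m₁ m₂ : ℕ) (X : Type*) [MeasureSpace X]
    [SigmaFinite (volume : Measure X)] :
    MeasurePreserving (psiEquiv m₁ m₂ X) volume volume :=
  (volume_measurePreserving_piCongrLeft (fun _ : Fin (m₁+m₂) => X) finSumFinEquiv).comp
    (volume_measurePreserving_sumPiEquivProdPi_symm (fun _ : Fin m₁ ⊕ Fin m₂ => X))

section Shuffles

variable {d m₁ m₂ : ℕ} (π₁ : Fin d → Equiv.Perm (Fin m₁)) (π₂ : Fin d → Equiv.Perm (Fin m₂))

/-- The shuffled integration domain. -/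
def shDomain (σ : Fin d → Equiv.Perm (Fin (m₁ + m₂))) : Set (Fin (m₁ + m₂) → Fin d → ℝ) :=
  intDomain (fun j => (σ j).trans (permSum (π₁ j) (π₂ j))) (fun _ => 0) (fun _ => 1)

/-- The `j`-th column of `t`, pulled back along `permSum`. -/
def colFun (j : Fin d) (t : Fin (m₁ + m₂) → Fin d → ℝ) : Fin (m₁ + m₂) → ℝ :=
  fun i => t (permSum (π₁ j) (π₂ j) i) j

lemma mem_shDomain_iff (σ : Fin d → Equiv.Perm (Fin (m₁ + m₂)))
    (t : Fin (m₁ + m₂) → Fin d → ℝ) :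
    t ∈ shDomain π₁ π₂ σ ↔
      ∀ j, (∀ i, t i j ∈ Set.Icc (0:ℝ) 1) ∧ StrictMono (colFun π₁ π₂ j t ∘ σ j) := by
  constructor
  · intro ht j; exact ⟨(ht j).1, (ht j).2⟩
  · intro h j; exact ⟨(h j).1, (h j).2⟩

lemma colFun_castAdd (j : Fin d) (t : Fin (m₁ + m₂) → Fin d → ℝ) (a : Fin m₁) :
    colFun π₁ π₂ j t (Fin.castAdd m₂ a) = t (Fin.castAdd m₂ (π₁ j a)) j := by
  rw [colFun, permSum_castAdd]

lemma colFun_natAdd (j : Fin d) (t : Fin (m₁ + m₂) → Fin d → ℝ) (a : Fin m₂) :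
    colFun π₁ π₂ j t (Fin.natAdd m₁ a) = t (Fin.natAdd m₁ (π₂ j a)) j := by
  rw [colFun, permSum_natAdd]

/-- The "split" set corresponding to the product of the two domains. -/
def splitSet : Set (Fin (m₁ + m₂) → Fin d → ℝ) :=
  ((fun t (i : Fin m₁) => t (Fin.castAdd m₂ i)) ⁻¹' intDomain π₁ (fun _ => 0) (fun _ => 1)) ∩
  ((fun t (i : Fin m₂) => t (Fin.natAdd m₁ i)) ⁻¹' intDomain π₂ (fun _ => 0) (fun _ => 1))

lemma measurableSet_splitSet : MeasurableSet (splitSet π₁ π₂) := by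
  refine MeasurableSet.inter ?_ ?_
  · exact (measurable_pi_lambda _ fun i => measurable_pi_apply _)
      (measurableSet_intDomain _ _ _)
  · exact (measurable_pi_lambda _ fun i => measurable_pi_apply _)
      (measurableSet_intDomain _ _ _)

lemma shDomain_subset_splitSet {σ : Fin d → Equiv.Perm (Fin (m₁ + m₂))}
    (hσ : ∀ j, IsShuffle m₁ m₂ (σ j)) : shDomain π₁ π₂ σ ⊆ splitSet π₁ π₂ := by
  intro t ht
  have h := (mem_shDomain_iff π₁ π₂ σ t).mp ht
  constructor
  · intro j
    refine ⟨fun i => (h j).1 _, ?_⟩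
    intro a b hab
    have hiff := strictMono_comp_iff (h j).2 (Fin.castAdd m₂ a) (Fin.castAdd m₂ b)
    have hlt : (σ j).symm (Fin.castAdd m₂ a) < (σ j).symm (Fin.castAdd m₂ b) :=
      (hσ j).1 _ _ (by simp only [Fin.lt_def, Fin.coe_castAdd]; exact hab)
        (by simp only [Fin.coe_castAdd]; exact b.2)
    have hv := hiff.mpr hlt
    rw [colFun_castAdd, colFun_castAdd] at hv
    exact hv
  · intro j
    refine ⟨fun i => (h j).1 _, ?_⟩
    intro a b hab
    have hiff := strictMono_comp_iff (h j).2 (Fin.natAdd m₁ a) (Fin.natAdd m₁ b)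
    have hlt : (σ j).symm (Fin.natAdd m₁ a) < (σ j).symm (Fin.natAdd m₁ b) :=
      (hσ j).2 _ _ (by simp only [Fin.lt_def, Fin.coe_natAdd]; omega)
        (by simp only [Fin.coe_natAdd]; omega)
    have hv := hiff.mpr hlt
    rw [colFun_natAdd, colFun_natAdd] at hv
    exact hv

lemma shDomain_disjoint {σ σ' : Fin d → Equiv.Perm (Fin (m₁ + m₂))} (hne : σ ≠ σ') :
    Disjoint (shDomain π₁ π₂ σ) (shDomain π₁ π₂ σ') := by
  rw [Set.disjoint_left]
  intro t ht ht'
  apply hne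
  funext j
  exact perm_eq_of_strictMono_comp ((mem_shDomain_iff π₁ π₂ σ t).mp ht j).2
    ((mem_shDomain_iff π₁ π₂ σ' t).mp ht' j).2

lemma splitSet_cover {t : Fin (m₁ + m₂) → Fin d → ℝ} (htS : t ∈ splitSet π₁ π₂)
    (hinj : ∀ (j : Fin d) (i i' : Fin (m₁ + m₂)), t i j = t i' j → i = i') :
    ∃ σ : Fin d → Equiv.Perm (Fin (m₁ + m₂)),
      (∀ j, IsShuffle m₁ m₂ (σ j)) ∧ t ∈ shDomain π₁ π₂ σ := by
  classical
  obtain ⟨h1, h2⟩ := htS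
  have hsm : ∀ j, StrictMono (colFun π₁ π₂ j t ∘ Tuple.sort (colFun π₁ π₂ j t)) := by
    intro j
    apply (Tuple.monotone_sort (colFun π₁ π₂ j t)).strictMono_of_injective
    have hvinj : Function.Injective (colFun π₁ π₂ j t) := by
      intro a b hab
      exact (permSum (π₁ j) (π₂ j)).injective (hinj j _ _ hab)
    exact hvinj.comp (Equiv.injective _)
  have hb1 : ∀ j, StrictMono fun a : Fin m₁ => colFun π₁ π₂ j t (Fin.castAdd m₂ a) := by
    intro j a b hab
    show colFun π₁ π₂ j t (Fin.castAdd m₂ a) < colFun π₁ π₂ j t (Fin.castAdd m₂ b)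
    rw [colFun_castAdd, colFun_castAdd]
    exact (h1 j).2 hab
  have hb2 : ∀ j, StrictMono fun a : Fin m₂ => colFun π₁ π₂ j t (Fin.natAdd m₁ a) := by
    intro j a b hab
    show colFun π₁ π₂ j t (Fin.natAdd m₁ a) < colFun π₁ π₂ j t (Fin.natAdd m₁ b)
    rw [colFun_natAdd, colFun_natAdd]
    exact (h2 j).2 hab
  refine ⟨fun j => Tuple.sort (colFun π₁ π₂ j t), fun j => ⟨?_, ?_⟩, ?_⟩
  · -- first shuffle condition
    intro a b hab hbm
    refine (strictMono_comp_iff (hsm j) a b).mp ?_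
    have ham : (a : ℕ) < m₁ := lt_trans hab hbm
    have e1 : Fin.castAdd m₂ (⟨a, ham⟩ : Fin m₁) = a := by ext; rfl
    have e2 : Fin.castAdd m₂ (⟨b, hbm⟩ : Fin m₁) = b := by ext; rfl
    have := hb1 j (show (⟨a, ham⟩ : Fin m₁) < ⟨b, hbm⟩ from hab)
    simpa only [e1, e2] using this
  · -- second shuffle condition
    intro a b hab ham
    refine (strictMono_comp_iff (hsm j) a b).mp ?_
    have hbm : m₁ ≤ (b : ℕ) := le_trans ham (le_of_lt hab)
    have ha2 : (a : ℕ) - m₁ < m₂ := by have := a.2; omega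
    have hb2' : (b : ℕ) - m₁ < m₂ := by have := b.2; omega
    have e1 : Fin.natAdd m₁ (⟨(a : ℕ) - m₁, ha2⟩ : Fin m₂) = a := by
      ext; simp only [Fin.coe_natAdd]; omega
    have e2 : Fin.natAdd m₁ (⟨(b : ℕ) - m₁, hb2'⟩ : Fin m₂) = b := by
      ext; simp only [Fin.coe_natAdd]; omega
    have hlt : (⟨(a : ℕ) - m₁, ha2⟩ : Fin m₂) < ⟨(b : ℕ) - m₁, hb2'⟩ := by
      simp only [Fin.lt_def]
      have : (a : ℕ) < (b : ℕ) := hab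
      omega
    have := hb2 j hlt
    simpa only [e1, e2] using this
  · -- t ∈ shDomain
    refine (mem_shDomain_iff π₁ π₂ _ t).mpr fun j => ⟨?_, hsm j⟩
    intro i
    refine Fin.addCases (fun i0 => ?_) (fun i0 => ?_) i
    · exact (h1 j).1 i0
    · exact (h2 j).1 i0

lemma splitSet_ae_eq_biUnion :
    splitSet π₁ π₂ =ᵐ[volume]
      ⋃ σ ∈ Finset.univ.filter
        (fun σ : Fin d → Equiv.Perm (Fin (m₁ + m₂)) => ∀ j, IsShuffle m₁ m₂ (σ j)),
        shDomain π₁ π₂ σ := by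
  classical
  set T := Finset.univ.filter
    (fun σ : Fin d → Equiv.Perm (Fin (m₁ + m₂)) => ∀ j, IsShuffle m₁ m₂ (σ j)) with hT
  have hUS : (⋃ σ ∈ T, shDomain π₁ π₂ σ) ⊆ splitSet π₁ π₂ := by
    refine Set.iUnion₂_subset fun σ hσ => shDomain_subset_splitSet π₁ π₂ ?_
    rw [hT] at hσ
    exact (Finset.mem_filter.mp hσ).2
  have hBad : volume (⋃ (j : Fin d) (p : Fin (m₁ + m₂) × Fin (m₁ + m₂)) (_ : p.1 ≠ p.2),
      {t : Fin (m₁ + m₂) → Fin d → ℝ | t p.1 j = t p.2 j}) = 0 :=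
    measure_iUnion_null fun j => measure_iUnion_null fun p => measure_iUnion_null fun hne =>
      hyperplane_null j p.1 p.2 hne
  rw [ae_eq_set]
  constructor
  · refine measure_mono_null (fun t ht => ?_) hBad
    obtain ⟨htS, htU⟩ := ht
    by_cases hinj : ∀ (j : Fin d) (i i' : Fin (m₁ + m₂)), t i j = t i' j → i = i'
    · exfalso
      obtain ⟨σ, hσ, htD⟩ := splitSet_cover π₁ π₂ htS hinj
      exact htU (Set.mem_iUnion.mpr ⟨σ, Set.mem_iUnion.mpr
        ⟨by rw [hT]; exact Finset.mem_filter.mpr ⟨Finset.mem_univ _, hσ⟩, htD⟩⟩)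
    · push_neg at hinj
      obtain ⟨j, i, i', heq, hne⟩ := hinj
      exact Set.mem_iUnion.mpr ⟨j, Set.mem_iUnion.mpr
        ⟨(i, i'), Set.mem_iUnion.mpr ⟨hne, heq⟩⟩⟩
  · rw [Set.diff_eq_empty.mpr hUS]
    simp

end Shuffles

lemma integrableOn_prod_jacobian {d n m : ℕ} {L : ℝ} (hL0 : 0 ≤ L)
    {x : (Fin d → ℝ) → Fin n → ℝ} (hx : EuclidLip L x) (P : Fin m → Fin d → Fin n)
    {A : Set (Fin m → Fin d → ℝ)} (hA : MeasurableSet A)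
    (hAQ : ∀ t ∈ A, ∀ (i : Fin m) (j : Fin d), t i j ∈ Set.Icc (0:ℝ) 1) :
    IntegrableOn (fun t => ∏ i, jacobianMinor x (P i) (t i)) A volume := by
  have hQ : volume (Set.univ.pi fun _ : Fin m =>
      Set.univ.pi fun _ : Fin d => Set.Icc (0:ℝ) 1) = 1 := by
    have h1 : volume (Set.univ.pi fun _ : Fin d => Set.Icc (0:ℝ) 1) = 1 := by
      rw [volume_pi_pi]
      simp [Real.volume_Icc]
    rw [volume_pi_pi]
    simp only [h1, Finset.prod_const, one_pow]
  have hsub : A ⊆ Set.univ.pi fun _ : Fin m =>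
      Set.univ.pi fun _ : Fin d => Set.Icc (0:ℝ) 1 := by
    intro t ht
    rw [Set.mem_univ_pi]
    intro i
    rw [Set.mem_univ_pi]
    intro j
    exact hAQ t ht i j
  have hfin : volume A ≠ ⊤ := by
    have hle : volume A ≤ volume (Set.univ.pi fun _ : Fin m =>
        Set.univ.pi fun _ : Fin d => Set.Icc (0:ℝ) 1) := measure_mono hsub
    rw [hQ] at hle
    exact (hle.trans_lt ENNReal.one_lt_top).ne
  refine Measure.integrableOn_of_bounded
    (M := ((d.factorial : ℝ) * (L * Real.sqrt d) ^ d) ^ m) hfin ?_ ?_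
  · exact (Finset.measurable_prod _ fun i _ =>
      (measurable_jacobianMinor x (P i)).comp (measurable_pi_apply i)).aestronglyMeasurable
  · refine ae_of_all _ fun t => ?_
    calc ‖∏ i, jacobianMinor x (P i) (t i)‖
        = ∏ i, |jacobianMinor x (P i) (t i)| := by rw [Real.norm_eq_abs, Finset.abs_prod]
      _ ≤ ∏ _i : Fin m, ((d.factorial : ℝ) * (L * Real.sqrt d) ^ d) :=
          Finset.prod_le_prod (fun i _ => abs_nonneg _)
            (fun i _ => abs_jacobianMinor_le hL0 hx _ _)
      _ = ((d.factorial : ℝ) * (L * Real.sqrt d) ^ d) ^ m := by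
          rw [Finset.prod_const, Finset.card_univ, Fintype.card_fin]

/-- the shuffle product identity
`Φ_{m₁}^{P¹,π¹}(x) · Φ_{m₂}^{P²,π²}(x) = Σ_{σ ∈ Sh(m₁,m₂)^d} Φ_{m₁+m₂}^{P, πσ}(x)`. -/
theorem stmt0 (d n m₁ m₂ : ℕ) (hd : 1 ≤ d) (hn : d ≤ n) (hm₁ : 1 ≤ m₁) (hm₂ : 1 ≤ m₂)
    (x : (Fin d → ℝ) → Fin n → ℝ) (hx : IsLipMap x)
    (P₁ : Fin m₁ → Fin d → Fin n) (hP₁ : ∀ i, StrictMono (P₁ i))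
    (π₁ : Fin d → Equiv.Perm (Fin m₁))
    (P₂ : Fin m₂ → Fin d → Fin n) (hP₂ : ∀ i, StrictMono (P₂ i))
    (π₂ : Fin d → Equiv.Perm (Fin m₂)) :
    msMonomial x P₁ π₁ * msMonomial x P₂ π₂ =
      ∑ σ ∈ Finset.univ.filter
          (fun σ : Fin d → Equiv.Perm (Fin (m₁ + m₂)) => ∀ j, IsShuffle m₁ m₂ (σ j)),
        msMonomial x (Fin.append P₁ P₂)
          (fun j => (σ j).trans (permSum (π₁ j) (π₂ j))) := by
  classical
  obtain ⟨L₀, hL₀⟩ := hx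
  have hL0 : (0:ℝ) ≤ max L₀ 0 := le_max_right _ _
  have hL : EuclidLip (max L₀ 0) x := fun s t =>
    (hL₀ s t).trans (mul_le_mul_of_nonneg_right (le_max_left _ _) (Real.sqrt_nonneg _))
  have hψ := psiEquiv_measurePreserving m₁ m₂ (Fin d → ℝ)
  have hψemb : MeasurableEmbedding (psiEquiv m₁ m₂ (Fin d → ℝ)) :=
    (psiEquiv m₁ m₂ (Fin d → ℝ)).measurableEmbedding
  have hpre : (psiEquiv m₁ m₂ (Fin d → ℝ)) ⁻¹' splitSet π₁ π₂ =
      (intDomain π₁ (fun _ => 0) (fun _ => 1)) ×ˢ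
        (intDomain π₂ (fun _ => 0) (fun _ => 1)) := by
    ext p
    have hp := psiEquiv_apply p
    simp only [Set.mem_preimage, hp, splitSet, Set.mem_inter_iff, Set.mem_prod]
    have e1 : (fun i : Fin m₁ => Fin.append p.1 p.2 (Fin.castAdd m₂ i)) = p.1 :=
      funext fun i => Fin.append_left _ _ _
    have e2 : (fun i : Fin m₂ => Fin.append p.1 p.2 (Fin.natAdd m₁ i)) = p.2 :=
      funext fun i => Fin.append_right _ _ _
    rw [e1, e2]
  have hg : ∀ p : (Fin m₁ → Fin d → ℝ) × (Fin m₂ → Fin d → ℝ),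
      (∏ i, jacobianMinor x (Fin.append P₁ P₂ i) ((psiEquiv m₁ m₂ (Fin d → ℝ)) p i)) =
      (∏ i, jacobianMinor x (P₁ i) (p.1 i)) * (∏ i, jacobianMinor x (P₂ i) (p.2 i)) := by
    intro p
    rw [psiEquiv_apply p, Fin.prod_univ_add]
    congr 1
    · exact Finset.prod_congr rfl fun i _ => by rw [Fin.append_left, Fin.append_left]
    · exact Finset.prod_congr rfl fun i _ => by rw [Fin.append_right, Fin.append_right]
  have step1 : msMonomial x P₁ π₁ * msMonomial x P₂ π₂ =
      ∫ t in splitSet π₁ π₂, ∏ i, jacobianMinor x (Fin.append P₁ P₂ i) (t i) := by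
    have h1 : ∫ t in splitSet π₁ π₂, (∏ i, jacobianMinor x (Fin.append P₁ P₂ i) (t i)) =
        ∫ p in (psiEquiv m₁ m₂ (Fin d → ℝ)) ⁻¹' splitSet π₁ π₂,
          (∏ i, jacobianMinor x (Fin.append P₁ P₂ i) ((psiEquiv m₁ m₂ (Fin d → ℝ)) p i)) :=
      ((hψ.restrict_preimage (measurableSet_splitSet π₁ π₂)).integral_comp hψemb
        (fun t => ∏ i, jacobianMinor x (Fin.append P₁ P₂ i) (t i))).symm
    rw [h1, hpre]
    simp_rw [hg]
    rw [Measure.volume_eq_prod, ← Measure.prod_restrict,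
      integral_prod_mul (f := fun t₁ : Fin m₁ → Fin d → ℝ => ∏ i, jacobianMinor x (P₁ i) (t₁ i))
        (g := fun t₂ : Fin m₂ → Fin d → ℝ => ∏ i, jacobianMinor x (P₂ i) (t₂ i))]
    rfl
  have step2 : (∫ t in splitSet π₁ π₂, ∏ i, jacobianMinor x (Fin.append P₁ P₂ i) (t i)) =
      ∑ σ ∈ Finset.univ.filter
          (fun σ : Fin d → Equiv.Perm (Fin (m₁ + m₂)) => ∀ j, IsShuffle m₁ m₂ (σ j)),
        ∫ t in shDomain π₁ π₂ σ, ∏ i, jacobianMinor x (Fin.append P₁ P₂ i) (t i) := by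
    rw [setIntegral_congr_set (splitSet_ae_eq_biUnion π₁ π₂)]
    refine integral_biUnion_finset _ (fun σ _ => measurableSet_intDomain _ _ _) ?_ ?_
    · intro σ hσ σ' hσ' hne
      exact shDomain_disjoint π₁ π₂ hne
    · intro σ _
      refine integrableOn_prod_jacobian hL0 hL (Fin.append P₁ P₂)
        (measurableSet_intDomain _ _ _) ?_
      intro t ht i j
      exact ((mem_shDomain_iff π₁ π₂ σ t).mp ht j).1 i
  rw [step1, step2]
  exact Finset.sum_congr rfl fun σ _ => rfl

end
end

section
/- Let g_1,…,g_d : [0,1] → ℝ^n be Lipschitz paths and define x ∈ Lip(□^d, ℝ^n) by x(s_1,…,s_d) := Σ_{j=1}^d g_j(s_j). Suppose for some j₀ ∈ {1,…,d} the path g_{j₀} has trivial path signature, i.e. S_m^Q(g_{j₀}) = 0 for every m ≥ 1 and every multi-index Q ∈ {1,…,n}^m (for example, if g_{j₀} is a tree-like path). Then Φ_m^{P,π}(x) = 0 for every m ≥ 1 and every level-m index (P,π) ∈ O_{d,n}^m × Σ_m^d. -/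
open MeasureTheory

open scoped Classical

noncomputable section

/-- Lipschitz path (Euclidean norm on the codomain). -/
def IsLipPath {n : ℕ} (g : ℝ → Fin n → ℝ) : Prop :=
  ∃ L : ℝ, ∀ u v : ℝ, Real.sqrt (∑ k, (g u k - g v k) ^ 2) ≤ L * |u - v|

/-- The path signature monomial `S_m^Q(g) = ∫_{0 ≤ u₁ < ⋯ < u_m ≤ 1} ∏ g'_{Q i}(u_i) du`. -/
def pathSig {n : ℕ} (m : ℕ) (g : ℝ → Fin n → ℝ) (Q : Fin m → Fin n) : ℝ :=
  ∫ u in permSimplex (1 : Equiv.Perm (Fin m)) 0 1,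
    ∏ i, deriv (fun v => g v (Q i)) (u i)

/-!
Wherever all the `g j` are differentiable (almost everywhere, by Rademacher), the Jacobian minor
of `x` is the determinant of the matrix `(∂ g_j^{P r} / ∂ u)(s_j)`, whose `j`-th column depends on
`s_j` alone. Expanding the product of these determinants by the Leibniz formula, every term is a
product of functions of the single variables `t i j`. The domain `D` is a product over `j` of
permuted simplices in the columns `(t i j)_i`, so by Fubini the integral of each term factors
over `j`, and after reordering coordinates by `π j₀` the `j₀`-th factor is a signature monomial
of `g j₀`, which vanishes.
-/

open Finset

def MeasurableEquiv.piComm (ι κ α : Type*) [MeasurableSpace α] :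
    (ι → κ → α) ≃ᵐ (κ → ι → α) where
  toEquiv := ⟨fun t k i => t i k, fun u i k => u k i, fun _ => rfl, fun _ => rfl⟩
  measurable_toFun := by dsimp; fun_prop
  measurable_invFun := by dsimp; fun_prop

theorem MeasureTheory.measurePreserving_piComm {ι κ α : Type*} [Fintype ι] [Fintype κ]
    [MeasurableSpace α] (μ : Measure α) [SigmaFinite μ] :
    MeasurePreserving (MeasurableEquiv.piComm ι κ α)
      (Measure.pi fun _ => Measure.pi fun _ => μ) (Measure.pi fun _ => Measure.pi fun _ => μ) := by
  refine ⟨(MeasurableEquiv.piComm ι κ α).measurable, (Measure.pi_eq_generateFrom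
    (fun _ => generateFrom_pi) (fun _ => isPiSystem_pi)
    (fun _ => Measure.FiniteSpanningSetsIn.pi fun _ => μ.toFiniteSpanningSetsIn) ?_).symm⟩
  intro s hs
  choose s' hs' hs's using hs
  obtain rfl : s = fun k => Set.univ.pi (s' k) := funext fun k => (hs's k).symm
  have hpre : MeasurableEquiv.piComm ι κ α ⁻¹' Set.univ.pi (fun k => Set.univ.pi (s' k)) =
      Set.univ.pi fun i => Set.univ.pi fun k => s' k i := by
    ext t
    simp only [Set.mem_preimage, Set.mem_univ_pi]
    exact ⟨fun h i k => h k i, fun h k i => h i k⟩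
  rw [Measure.map_apply (MeasurableEquiv.piComm ι κ α).measurable
    (.univ_pi fun k => .univ_pi fun i => hs' k i (Set.mem_univ i)), hpre]
  simp only [Measure.pi_pi]
  exact prod_comm

theorem MeasureTheory.ae_forall_apply_apply {ι κ α : Type*} [Fintype ι] [Fintype κ]
    [MeasurableSpace α] {μ : Measure α} [SigmaFinite μ] {p : α → Prop} (h : ∀ᵐ a ∂μ, p a) :
    ∀ᵐ t ∂(Measure.pi fun _ : ι => Measure.pi fun _ : κ => μ), ∀ i k, p (t i k) := by
  refine ae_all_iff.2 fun i => ae_all_iff.2 fun k => ?_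
  exact (Measure.quasiMeasurePreserving_eval (fun _ => Measure.pi fun _ : κ => μ) i).ae
    ((Measure.quasiMeasurePreserving_eval (fun _ : κ => μ) k).ae h)

theorem MeasureTheory.setIntegral_univ_pi_prod {ι α : Type*} [Fintype ι] [MeasurableSpace α]
    {μ : Measure α} [SigmaFinite μ] (s : ι → Set α) (f : ι → α → ℝ) :
    ∫ u in Set.univ.pi s, ∏ i, f i (u i) ∂(Measure.pi fun _ => μ) = ∏ i, ∫ a in s i, f i a ∂μ := by
  rw [Measure.restrict_pi_pi, integral_fintype_prod_eq_prod]

theorem Matrix.prod_det_eq_sum {ι n R : Type*} [Fintype ι] [DecidableEq ι] [Fintype n]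
    [DecidableEq n] [CommRing R] (A : ι → Matrix n n R) :
    ∏ i, (A i).det =
      ∑ σ : ι → Equiv.Perm n, (∏ i, (Equiv.Perm.sign (σ i) : R)) * ∏ i, ∏ j, A i (σ i j) j := by
  simp_rw [Matrix.det_apply', Fintype.prod_sum, prod_mul_distrib]

theorem setIntegral_permSimplex_prod {m : ℕ} (π : Equiv.Perm (Fin m)) (a b : ℝ)
    (f : Fin m → ℝ → ℝ) :
    ∫ u in permSimplex π a b, ∏ i, f i (u i) = ∫ v in permSimplex 1 a b, ∏ i, f (π i) (v i) := by
  set e := MeasurableEquiv.arrowCongr' π.symm (MeasurableEquiv.refl ℝ)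
  have he : MeasurePreserving e := volume_preserving_arrowCongr' _ _ (.id volume)
  have he_apply : ∀ u i, e u i = u (π i) := fun _ _ => rfl
  have hpre : e ⁻¹' permSimplex 1 a b = permSimplex π a b := by
    ext u
    simp only [permSimplex, Set.mem_preimage, Set.mem_ofPred_eq, he_apply, Equiv.Perm.coe_one,
      id_eq]
    exact and_congr_left' (π.forall_congr_right (q := fun i => u i ∈ Set.Icc a b))
  rw [← hpre, ← he.setIntegral_preimage_emb e.measurableEmbedding (fun v => ∏ i, f (π i) (v i))]
  congr 1 with u
  exact (Equiv.prod_comp π fun i => f i (u i)).symm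

theorem intDomain_eq_preimage_piComm {m d : ℕ} (π : Fin d → Equiv.Perm (Fin m))
    (a b : Fin d → ℝ) :
    intDomain π a b =
      MeasurableEquiv.piComm _ _ _ ⁻¹' Set.univ.pi fun j => permSimplex (π j) (a j) (b j) := by
  ext t
  simp only [intDomain, Set.mem_ofPred_eq, Set.mem_preimage, Set.mem_univ_pi]
  rfl

theorem setIntegral_intDomain_prod {m d : ℕ} (π : Fin d → Equiv.Perm (Fin m)) (a b : Fin d → ℝ)
    (f : Fin d → Fin m → ℝ → ℝ) :
    ∫ t in intDomain π a b, ∏ i, ∏ j, f j i (t i j) =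
      ∏ j, ∫ w in permSimplex (π j) (a j) (b j), ∏ i, f j i (w i) := by
  have h := (measurePreserving_piComm (ι := Fin m) (κ := Fin d) (volume : Measure ℝ))
    |>.setIntegral_preimage_emb (MeasurableEquiv.piComm _ _ _).measurableEmbedding
    (fun u => ∏ j, ∏ i, f j i (u j i)) (Set.univ.pi fun j => permSimplex (π j) (a j) (b j))
  rw [intDomain_eq_preimage_piComm]
  simp_rw [prod_comm (s := univ (α := Fin m))]
  exact h.trans (setIntegral_univ_pi_prod (μ := (volume : Measure (Fin m → ℝ))) _
    fun j w => ∏ i, f j i (w i))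

theorem integrableOn_intDomain_prod {m d : ℕ} (π : Fin d → Equiv.Perm (Fin m)) (a b : Fin d → ℝ)
    {f : Fin d → Fin m → ℝ → ℝ} {C : Fin d → ℝ} (hf : ∀ j i, Measurable (f j i))
    (hC : ∀ j i u, |f j i u| ≤ C j) :
    IntegrableOn (fun t => ∏ i, ∏ j, f j i (t i j)) (intDomain π a b) := by
  have hsub : intDomain π a b ⊆ Set.Icc (fun _ j => a j) (fun _ j => b j) :=
    fun t ht => ⟨fun i j => ((ht j).1 i).1, fun i j => ((ht j).1 i).2⟩
  refine Measure.integrableOn_of_bounded (M := ∏ _i : Fin m, ∏ j, C j)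
    (measure_mono hsub |>.trans_lt measure_Icc_lt_top).ne ?_ (.of_forall fun t => ?_)
  · exact (Finset.measurable_prod _ fun i _ => Finset.measurable_prod _ fun j _ =>
      (hf j i).comp (by fun_prop)).aestronglyMeasurable
  simp only [Real.norm_eq_abs, abs_prod]
  gcongr with i _ j _
  exact hC j i _

theorem IsLipPath.exists_lipschitzWith_apply {n : ℕ} {g : ℝ → Fin n → ℝ} (hg : IsLipPath g) :
    ∃ C, ∀ k, LipschitzWith C fun u => g u k := by
  obtain ⟨L, hL⟩ := hg
  refine ⟨L.toNNReal, fun k => .of_dist_le_mul fun u v => ?_⟩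
  have hcoord : |g u k - g v k| ≤ √(∑ k', (g u k' - g v k') ^ 2) :=
    Real.abs_le_sqrt (single_le_sum (f := fun k' => (g u k' - g v k') ^ 2)
      (fun _ _ => sq_nonneg _) (mem_univ k))
  rw [Real.dist_eq, Real.dist_eq]
  exact hcoord.trans ((hL u v).trans (by gcongr; exact Real.le_coe_toNNReal L))

theorem jacobianMinor_separable {d n : ℕ} (g : Fin d → ℝ → Fin n → ℝ) (Q : Fin d → Fin n)
    (s : Fin d → ℝ) (hs : ∀ j k, DifferentiableAt ℝ (fun u => g j u k) (s j)) :
    jacobianMinor (fun s k => ∑ j, g j (s j) k) Q s =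
      (Matrix.of fun r j => deriv (fun u => g j u (Q r)) (s j)).det := by
  unfold jacobianMinor
  congr 1
  ext r j
  have hderiv : HasFDerivAt (fun t : Fin d → ℝ => ∑ j', g j' (t j') (Q r))
      (∑ j', deriv (fun u => g j' u (Q r)) (s j') • ContinuousLinearMap.proj (R := ℝ) j') s :=
    HasFDerivAt.fun_sum fun j' _ =>
      (hs j' (Q r)).hasDerivAt.comp_hasFDerivAt (f := fun t : Fin d → ℝ => t j') s
        (hasFDerivAt_apply j' s)
  simp [hderiv.fderiv, Pi.single_apply]

theorem msMonomial_separable_eq_sum {d n m : ℕ} (g : Fin d → ℝ → Fin n → ℝ)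
    (hg : ∀ j, IsLipPath (g j)) (P : Fin m → Fin d → Fin n) (π : Fin d → Equiv.Perm (Fin m)) :
    msMonomial (fun s k => ∑ j, g j (s j) k) P π =
      ∑ σ : Fin m → Equiv.Perm (Fin d), (∏ i, (Equiv.Perm.sign (σ i) : ℝ)) *
        ∏ j, ∫ w in permSimplex (π j) 0 1, ∏ i, deriv (fun u => g j u (P i (σ i j))) (w i) := by
  choose C hC using fun j => (hg j).exists_lipschitzWith_apply
  have hdiff : ∀ᵐ t : Fin m → Fin d → ℝ, ∀ i j, ∀ j' k,
      DifferentiableAt ℝ (fun u => g j' u k) (t i j) :=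
    ae_forall_apply_apply (ae_all_iff.2 fun j' => ae_all_iff.2 fun k =>
      (hC j' k).ae_differentiableAt_of_real)
  have hint : ∀ σ : Fin m → Equiv.Perm (Fin d),
      IntegrableOn (fun t => ∏ i, ∏ j, deriv (fun u => g j u (P i (σ i j))) (t i j))
        (intDomain π (fun _ => 0) (fun _ => 1)) :=
    fun σ => integrableOn_intDomain_prod π _ _ (fun _ _ => measurable_deriv _)
      fun j _ _ => norm_deriv_le_of_lipschitz (hC j _)
  unfold msMonomial msMonomialOn
  calc _ = ∫ t in intDomain π (fun _ => 0) (fun _ => 1), ∑ σ : Fin m → Equiv.Perm (Fin d),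
        (∏ i, (Equiv.Perm.sign (σ i) : ℝ)) *
          ∏ i, ∏ j, deriv (fun u => g j u (P i (σ i j))) (t i j) := by
        refine integral_congr_ae (ae_restrict_of_ae (hdiff.mono fun t ht => ?_))
        simp_rw [jacobianMinor_separable g _ _ fun j => ht _ j j]
        exact Matrix.prod_det_eq_sum _
    _ = _ := by
        rw [integral_finsetSum _ fun σ _ => (hint σ).const_mul _]
        simp_rw [integral_const_mul, setIntegral_intDomain_prod]

theorem setIntegral_permSimplex_deriv_eq_pathSig {n m : ℕ} (g : ℝ → Fin n → ℝ)
    (π : Equiv.Perm (Fin m)) (Q : Fin m → Fin n) :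
    ∫ w in permSimplex π 0 1, ∏ i, deriv (fun u => g u (Q i)) (w i) = pathSig m g (Q ∘ π) :=
  setIntegral_permSimplex_prod π 0 1 _

theorem stmt12_general (d n : ℕ)
    (g : Fin d → ℝ → Fin n → ℝ) (hg : ∀ j, IsLipPath (g j))
    (j₀ : Fin d)
    (htriv : ∀ m : ℕ, 1 ≤ m → ∀ Q : Fin m → Fin n, pathSig m (g j₀) Q = 0) :
    ∀ (m : ℕ), 1 ≤ m → ∀ (P : Fin m → Fin d → Fin n), (∀ i, StrictMono (P i)) →
      ∀ π : Fin d → Equiv.Perm (Fin m),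
        msMonomial (fun s k => ∑ j, g j (s j) k) P π = 0 := by
  intro m hm P _ π
  rw [msMonomial_separable_eq_sum g hg]
  refine sum_eq_zero fun σ _ => ?_
  rw [prod_eq_zero (mem_univ j₀) ?_, mul_zero]
  rw [setIntegral_permSimplex_deriv_eq_pathSig (g j₀) (π j₀) fun i => P i (σ i j₀)]
  exact htriv m hm _

/-- if `x(s) = Σ_j g_j(s_j)` and some `g_{j₀}` has trivial path
signature, then all mapping space monomials of `x` vanish. -/
theorem stmt12 (d n : ℕ) (hd : 1 ≤ d) (hn : d ≤ n)
    (g : Fin d → ℝ → Fin n → ℝ) (hg : ∀ j, IsLipPath (g j))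
    (j₀ : Fin d)
    (htriv : ∀ m : ℕ, 1 ≤ m → ∀ Q : Fin m → Fin n, pathSig m (g j₀) Q = 0) :
    ∀ (m : ℕ), 1 ≤ m → ∀ (P : Fin m → Fin d → Fin n), (∀ i, StrictMono (P i)) →
      ∀ π : Fin d → Equiv.Perm (Fin m),
        msMonomial (fun s k => ∑ j, g j (s j) k) P π = 0 :=
  stmt12_general d n g hg j₀ htriv

end
end

section
/- Let x ∈ Lip(□^d, ℝ^n), let τ = (τ_1,…,τ_d) ∈ {0,1}^d, and define the reflected map x^τ(s) := x(s_1^{τ_1},…,s_d^{τ_d}), where s^0 := s and s^1 := 1 − s. For π ∈ Σ_m let the reversal π⃖ ∈ Σ_m be π⃖(i) := π(m+1−i), and for π = (π_1,…,π_d) ∈ Σ_m^d set π^τ := (π_1^{τ_1},…,π_d^{τ_d}) with π^0 := π and π^1 := π⃖. Then for every m ≥ 1 and level-m index (P,π): Φ_m^{P,π}(x^τ) = (−1)^{m·|τ|} · Φ_m^{P,π^τ}(x), where |τ| is the number of nonzero entries of τ. -/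
open MeasureTheory

open scoped Classical

noncomputable section

/-- Reflecting a Jacobian minor multiplies it by `(-1)^{|τ|}`. -/
theorem jac_reflect {d n : ℕ} (x : (Fin d → ℝ) → Fin n → ℝ) (τ : Fin d → Bool)
    (Q : Fin d → Fin n) (s : Fin d → ℝ) :
    jacobianMinor (fun s => x (fun j => if τ j then 1 - s j else s j)) Q s =
      (-1 : ℝ) ^ (Finset.univ.filter (fun j : Fin d => τ j = true)).card *
        jacobianMinor x Q (fun j => if τ j then 1 - s j else s j) := by
  set ε : Fin d → ℝ := fun j => if τ j then -1 else 1 with hε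
  set ref : (Fin d → ℝ) → (Fin d → ℝ) := fun s j => if τ j then 1 - s j else s j with href
  set c : Fin d → ℝ := fun j => if τ j then 1 else 0 with hc
  set Llin : (Fin d → ℝ) →L[ℝ] (Fin d → ℝ) :=
    ContinuousLinearMap.pi (fun j => ε j • ContinuousLinearMap.proj j) with hL
  have hrefL : ∀ u, HasFDerivAt ref Llin u := by
    intro u
    have h1 : ref = fun t => c + Llin t := by
      funext t j
      simp only [href, hc, hL, Pi.add_apply, ContinuousLinearMap.pi_apply,
        ContinuousLinearMap.smul_apply, ContinuousLinearMap.proj_apply, hε,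
        Pi.smul_apply, smul_eq_mul]
      by_cases h : τ j <;> simp [h] <;> ring
    rw [h1]
    exact Llin.hasFDerivAt.const_add c
  have hinv : ∀ t, ref (ref t) = t := by
    intro t; funext j; by_cases h : τ j <;> simp [href, h]
  have hLs : ∀ j : Fin d, Llin (Pi.single j 1) = ε j • (Pi.single j 1 : Fin d → ℝ) := by
    intro j; funext j'
    simp only [hL, ContinuousLinearMap.pi_apply, ContinuousLinearMap.smul_apply,
      ContinuousLinearMap.proj_apply, Pi.smul_apply, smul_eq_mul, Pi.single_apply]
    by_cases h : j' = j <;> simp [h]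
  have entry : ∀ (k : Fin n) (j : Fin d),
      fderiv ℝ (fun t => x (ref t) k) s (Pi.single j 1)
        = ε j * fderiv ℝ (fun t => x t k) (ref s) (Pi.single j 1) := by
    intro k j
    by_cases hdiff : DifferentiableAt ℝ (fun t => x t k) (ref s)
    · have h1 : fderiv ℝ (fun t => x (ref t) k) s
          = (fderiv ℝ (fun t => x t k) (ref s)).comp Llin :=
        (hdiff.hasFDerivAt.comp s (hrefL s)).fderiv
      rw [h1, ContinuousLinearMap.comp_apply, hLs, ContinuousLinearMap.map_smul, smul_eq_mul]
    · have h2 : ¬ DifferentiableAt ℝ (fun t => x (ref t) k) s := by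
        intro h
        apply hdiff
        have h' : DifferentiableAt ℝ (fun t => x (ref t) k) (ref (ref s)) := by
          rw [hinv s]; exact h
        have h3 := h'.comp (ref s) (hrefL (ref s)).differentiableAt
        have h4 : ((fun t => x (ref t) k) ∘ ref) = fun t => x t k := by
          funext t; simp [Function.comp, hinv t]
        rwa [h4] at h3
      rw [fderiv_zero_of_not_differentiableAt hdiff,
        fderiv_zero_of_not_differentiableAt h2]
      simp
  have hmat : (Matrix.of fun i j : Fin d => fderiv ℝ (fun t => x (ref t) (Q i)) s (Pi.single j 1))
      = (Matrix.of fun i j : Fin d =>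
          fderiv ℝ (fun t => x t (Q i)) (ref s) (Pi.single j 1)) * Matrix.diagonal ε := by
    ext i j
    rw [Matrix.mul_diagonal]
    simp only [Matrix.of_apply]
    rw [entry (Q i) j]
    ring
  have hprod : ∏ j : Fin d, ε j
      = (-1 : ℝ) ^ (Finset.univ.filter (fun j : Fin d => τ j = true)).card := by
    rw [hε]
    rw [Finset.prod_ite, Finset.prod_const, Finset.prod_const, one_pow, mul_one]
  show (Matrix.of fun i j : Fin d =>
      fderiv ℝ (fun t => x (ref t) (Q i)) s (Pi.single j 1)).det = _
  rw [hmat, Matrix.det_mul, Matrix.det_diagonal, hprod]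
  rw [mul_comm]
  rfl

theorem col_reflect {m : ℕ} (σ : Equiv.Perm (Fin m)) (u : Fin m → ℝ) :
    ((fun i => 1 - u i) ∈ permSimplex (Fin.revPerm.trans σ) 0 1) ↔
      u ∈ permSimplex σ 0 1 := by
  unfold permSimplex
  simp only [Set.mem_setOf_eq, Set.mem_Icc, Equiv.trans_apply, Fin.revPerm_apply]
  constructor
  · rintro ⟨h1, h2⟩
    refine ⟨fun i => ⟨by linarith [(h1 i).2], by linarith [(h1 i).1]⟩, ?_⟩
    intro i k hik
    have h3 := h2 (Fin.rev_lt_rev.mpr hik)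
    simp only [Fin.rev_rev] at h3
    linarith
  · rintro ⟨h1, h2⟩
    refine ⟨fun i => ⟨by linarith [(h1 i).2], by linarith [(h1 i).1]⟩, ?_⟩
    intro i k hik
    have h3 := h2 (Fin.rev_lt_rev.mpr hik)
    simp only at h3 ⊢
    linarith

/-- reflection equivariance
`Φ_m^{P,π}(x^τ) = (-1)^{m|τ|} Φ_m^{P,π^τ}(x)`. -/
theorem stmt13 (d n m : ℕ) (hd : 1 ≤ d) (hn : d ≤ n) (hm : 1 ≤ m)
    (x : (Fin d → ℝ) → Fin n → ℝ) (hx : IsLipMap x) (τ : Fin d → Bool)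
    (P : Fin m → Fin d → Fin n) (hP : ∀ i, StrictMono (P i))
    (π : Fin d → Equiv.Perm (Fin m)) :
    msMonomial (fun s => x (fun j => if τ j then 1 - s j else s j)) P π =
      (-1 : ℝ) ^ (m * (Finset.univ.filter (fun j : Fin d => τ j = true)).card) *
        msMonomial x P (fun j => if τ j then Fin.revPerm.trans (π j) else π j) := by
  classical
  set c := (Finset.univ.filter (fun j : Fin d => τ j = true)).card with hcard
  set ref : (Fin d → ℝ) → (Fin d → ℝ) := fun s j => if τ j then 1 - s j else s j with href
  set T : (Fin m → Fin d → ℝ) → (Fin m → Fin d → ℝ) := fun t i => ref (t i) with hT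
  set π' : Fin d → Equiv.Perm (Fin m) :=
    fun j => if τ j then Fin.revPerm.trans (π j) else π j with hπ'
  have hinv : ∀ t, T (T t) = t := by
    intro t; funext i j; by_cases h : τ j <;> simp [hT, href, h]
  have hTm : Measurable T := by
    apply measurable_pi_lambda; intro i
    apply measurable_pi_lambda; intro j
    have hm1 : Measurable fun t : Fin m → Fin d → ℝ => t i j :=
      (measurable_pi_apply j).comp (measurable_pi_apply i)
    by_cases h : τ j
    · simp only [hT, href, h, if_true]
      exact hm1.const_sub 1
    · simp only [hT, href, h, if_false]
      exact hm1
  -- measure preserving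
  have hrefmp : MeasurePreserving ref volume volume := by
    have : ∀ j : Fin d,
        MeasurePreserving (fun r : ℝ => if τ j then 1 - r else r) volume volume := by
      intro j
      by_cases h : τ j
      · simp only [h, if_true]
        exact Measure.measurePreserving_sub_left volume 1
      · simp only [h, if_false]
        exact MeasurePreserving.id volume
    exact volume_preserving_pi this
  have hTmp : MeasurePreserving T volume volume := volume_preserving_pi fun _ => hrefmp
  -- measurable embedding
  let e : (Fin m → Fin d → ℝ) ≃ᵐ (Fin m → Fin d → ℝ) :=
    { toFun := T, invFun := T, left_inv := hinv, right_inv := hinv,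
      measurable_toFun := hTm, measurable_invFun := hTm }
  have hemb : MeasurableEmbedding T := e.measurableEmbedding
  -- the domain identity
  have hset : intDomain π (fun _ => (0:ℝ)) (fun _ => (1:ℝ))
      = T ⁻¹' (intDomain π' (fun _ => (0:ℝ)) (fun _ => (1:ℝ))) := by
    ext t
    simp only [intDomain, Set.mem_setOf_eq, Set.mem_preimage]
    refine forall_congr' fun j => ?_
    by_cases h : τ j
    · have hπ'j : π' j = Fin.revPerm.trans (π j) := by simp [hπ', h]
      have hTj : (fun i => T t i j) = fun i => 1 - (fun i => t i j) i := by
        funext i; simp [hT, href, h]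
      rw [hπ'j, hTj]
      exact (col_reflect (π j) (fun i => t i j)).symm
    · have hπ'j : π' j = π j := by simp [hπ', h]
      have hTj : (fun i => T t i j) = fun i => t i j := by
        funext i; simp [hT, href, h]
      rw [hπ'j, hTj]
  -- now compute
  show msMonomialOn (fun s => x (fun j => if τ j then 1 - s j else s j)) P π _ _
      = (-1 : ℝ) ^ (m * c) * msMonomialOn x P π' _ _
  unfold msMonomialOn
  have hintegrand : (fun t : Fin m → Fin d → ℝ =>
        ∏ i, jacobianMinor (fun s => x (fun j => if τ j then 1 - s j else s j)) (P i) (t i))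
      = fun t => (-1 : ℝ) ^ (m * c) * ∏ i, jacobianMinor x (P i) (T t i) := by
    funext t
    have : ∀ i, jacobianMinor (fun s => x (fun j => if τ j then 1 - s j else s j)) (P i) (t i)
        = (-1 : ℝ) ^ c * jacobianMinor x (P i) (T t i) := by
      intro i
      exact jac_reflect x τ (P i) (t i)
    rw [Finset.prod_congr rfl (fun i _ => this i), Finset.prod_mul_distrib,
      Finset.prod_const, Finset.card_univ, Fintype.card_fin, ← pow_mul, Nat.mul_comm c m]
  rw [hintegrand]
  rw [MeasureTheory.integral_const_mul]
  congr 1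
  rw [hset]
  exact hTmp.setIntegral_preimage_emb hemb
    (fun t => ∏ i, jacobianMinor x (P i) (t i)) _

end
end
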